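/- Consider the Gauss–Seidel iteration: enumerate the non-sink states as Q_ns = {1,…,s_ns}; set W^{0,0}_i = S_i for i ∈ Q_ns and W^{0,0}_j = Inv^{f_j}(S_j) for sink states j; for k ≥ 0 and 0 ≤ l ≤ s_ns − 1, set W^{k,l+1}_i = InvPre^{f_i}(G, W^{k,l}, S) for i = l+1 and W^{k,l+1}_j = W^{k,l}_j for j ≠ l+1, and W^{k+1,0} = W^{k,s_ns}. Then the sequence of collections W^{0,0}, W^{0,1}, …, W^{0,s_ns}, W^{1,1}, … is monotonically non-expanding in element-wise set inclusion: W^{k,l+1} ⊆ W^{k,l} for all k ≥ 0 and 0 ≤ l ≤ s_ns − 1, and all iterates are contained (element-wise) in the safety specification S. -/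
import Mathlib


open scoped Classical

/-- One-step controlled predecessor of `V` with respect to the set-valued
dynamics `f : X → U → Set X`. -/
def PreOp {X U : Type*} (f : X → U → Set X) (V : Set X) : Set X :=
  {x | ∃ u : U, f x u ⊆ V}

/-- One-step constrained controlled predecessor. -/
def PreInt {X U : Type*} (f : X → U → Set X) (V S : Set X) : Set X :=
  PreOp f V ∩ S

/-- The maximal controlled invariant set within `S` with respect to `f`: the
union of all `C ⊆ S` such that every `x ∈ C` admits a `u` with `f x u ⊆ C`. -/
def maxInv {X U : Type*} (f : X → U → Set X) (S : Set X) : Set X :=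
  ⋃₀ {C | C ⊆ S ∧ ∀ x ∈ C, ∃ u : U, f x u ⊆ C}

/-- The iterated constrained controlled predecessors `C_{0} = W`,
`C_{l} = PreInt^{f}(C_{l−1}, Si)`. -/
def CIter {X U : Type*} (f : X → U → Set X) (Si : Set X) (W : Set X) :
    ℕ → Set X
  | 0 => W
  | l + 1 => PreInt f (CIter f Si W l) Si

/-- The least preview time `T_min = min_{j : (i,j) ∈ E} τ_ij` among the
successors of `i`. -/
noncomputable def Tmin {Q : Type*} (E : Q → Q → Prop) (τ : Q → Q → ℕ) (i : Q) : ℕ :=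
  sInf {n : ℕ | ∃ j, E i j ∧ τ i j = n}

/-- The sets `C_{T_min}, C_{T_min + 1}, …` of Algorithm 2 (indexed here by the
offset from `T_min`):
`C_{T_min} = Inv^{f_i}(⋂_{j : (i,j) ∈ E} C_{τ_ij, j})` and, for `k > T_min`,
`C_k = PreInt^{f_i}(C_{k−1}, S_i) ∩ ⋂_{j : (i,j) ∈ E, τ_ij ≥ k} C_{τ_ij, j}`,
where `C_{l,j}` is the `l`-fold iterated constrained predecessor of `W_j`. -/
noncomputable def DSeq {Q X U : Type*} (f : Q → X → U → Set X) (E : Q → Q → Prop)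
    (τ : Q → Q → ℕ) (S : Q → Set X) (i : Q) (W : Q → Set X) : ℕ → Set X
  | 0 => maxInv (f i) (⋂ j ∈ {j | E i j}, CIter (f i) (S i) (W j) (τ i j))
  | m + 1 => PreInt (f i) (DSeq f E τ S i W m) (S i) ∩
      ⋂ j ∈ {j | E i j ∧ Tmin E τ i + (m + 1) ≤ τ i j},
        CIter (f i) (S i) (W j) (τ i j)

/-- The operator `InvPre^{f_i}(G, W, S)` of Algorithm 2: `C_{H_i}`, i.e. the
`(H_i − T_min)`-th element of the sequence starting at `C_{T_min}`. -/
noncomputable def InvPre {Q X U : Type*} (f : Q → X → U → Set X) (E : Q → Q → Prop)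
    (τ : Q → Q → ℕ) (Hld : Q → ℕ) (S : Q → Set X) (i : Q) (W : Q → Set X) :
    Set X :=
  DSeq f E τ S i W (Hld i - Tmin E τ i)
/-- The initialization of the Gauss–Seidel iteration of Algorithm 1:
`W^{0,0}_i = S_i` for non-sink states `i` and `W^{0,0}_j = Inv^{f_j}(S_j)` for
sink states `j`. -/
noncomputable def GSInit {Q X U : Type*} (f : Q → X → U → Set X) (E : Q → Q → Prop)
    (S : Q → Set X) : Q → Set X :=
  fun q => if ∃ p, E q p then S q else maxInv (f q) (S q)

/-- One inner step of the Gauss–Seidel iteration: update component `i` to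
`InvPre^{f_i}(G, W, S)` and leave the other components unchanged. -/
noncomputable def GSStep {Q X U : Type*} (f : Q → X → U → Set X) (E : Q → Q → Prop)
    (τ : Q → Q → ℕ) (Hld : Q → ℕ) (S : Q → Set X) (i : Q)
    (W : Q → Set X) : Q → Set X :=
  fun q => if q = i then InvPre f E τ Hld S i W else W q

/-- The Gauss–Seidel iteration of Algorithm 1, with the non-sink states
enumerated by `e : Fin m → Q` and updated cyclically in that order:
`GS (k * m + l)` is the iterate `W^{k,l}`. -/
noncomputable def GS {Q X U : Type*} (f : Q → X → U → Set X) (E : Q → Q → Prop)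
    (τ : Q → Q → ℕ) (Hld : Q → ℕ) (S : Q → Set X) {m : ℕ}
    (e : Fin m → Q) : ℕ → Q → Set X
  | 0 => GSInit f E S
  | n + 1 =>
      if h : 0 < m then
        GSStep f E τ Hld S (e ⟨n % m, Nat.mod_lt n h⟩)
          (GS f E τ Hld S e n)
      else GS f E τ Hld S e n

section Aux

variable {Q X U : Type*} (f : Q → X → U → Set X) (E : Q → Q → Prop)
    (τ : Q → Q → ℕ) (Hld : Q → ℕ) (S : Q → Set X)

lemma PreOp_mono {g : X → U → Set X} {V V' : Set X} (h : V ⊆ V') :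
    PreOp g V ⊆ PreOp g V' := fun _ ⟨u, hu⟩ => ⟨u, hu.trans h⟩

lemma PreInt_mono {g : X → U → Set X} {V V' Si : Set X} (h : V ⊆ V') :
    PreInt g V Si ⊆ PreInt g V' Si :=
  Set.inter_subset_inter_left _ (PreOp_mono h)

lemma PreInt_subset {g : X → U → Set X} {V Si : Set X} : PreInt g V Si ⊆ Si :=
  Set.inter_subset_right

lemma CIter_mono {g : X → U → Set X} {Si W W' : Set X} (h : W ⊆ W') :
    ∀ l, CIter g Si W l ⊆ CIter g Si W' l
  | 0 => h
  | l + 1 => PreInt_mono (CIter_mono h l)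

lemma CIter_succ_subset {g : X → U → Set X} {Si W : Set X} (l : ℕ) :
    CIter g Si W (l + 1) ⊆ Si := PreInt_subset

lemma maxInv_subset {g : X → U → Set X} {Si : Set X} : maxInv g Si ⊆ Si := by
  rintro x ⟨C, ⟨hC, _⟩, hx⟩; exact hC hx

lemma maxInv_mono {g : X → U → Set X} {Si Si' : Set X} (h : Si ⊆ Si') :
    maxInv g Si ⊆ maxInv g Si' := by
  rintro x ⟨C, ⟨hC, hinv⟩, hx⟩; exact ⟨C, ⟨hC.trans h, hinv⟩, hx⟩

lemma DSeq_mono {i : Q} {W W' : Q → Set X} (h : ∀ q, W q ⊆ W' q) :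
    ∀ n, DSeq f E τ S i W n ⊆ DSeq f E τ S i W' n
  | 0 => by
      refine maxInv_mono ?_
      exact Set.iInter₂_mono fun j _ => CIter_mono (h j) _
  | n + 1 => by
      refine Set.inter_subset_inter (PreInt_mono (DSeq_mono h n)) ?_
      exact Set.iInter₂_mono fun j _ => CIter_mono (h j) _

lemma InvPre_mono {i : Q} {W W' : Q → Set X} (h : ∀ q, W q ⊆ W' q) :
    InvPre f E τ Hld S i W ⊆ InvPre f E τ Hld S i W' :=
  DSeq_mono f E τ S h _

lemma Tmin_le {i j : Q} (h : E i j) : Tmin E τ i ≤ τ i j :=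
  Nat.sInf_le ⟨j, h, rfl⟩

lemma InvPre_subset_S {i : Q} (hns : ∃ p, E i p) (hH : 1 ≤ Hld i)
    (W : Q → Set X) : InvPre f E τ Hld S i W ⊆ S i := by
  unfold InvPre
  rcases Nat.eq_zero_or_pos (Hld i - Tmin E τ i) with h0 | hpos
  · rw [h0]
    obtain ⟨j, hj⟩ := hns
    have hT : 1 ≤ Tmin E τ i := le_trans hH (Nat.le_of_sub_eq_zero h0)
    have hτ : 1 ≤ τ i j := le_trans hT (Tmin_le E τ hj)
    refine maxInv_subset.trans ?_
    refine (Set.biInter_subset_of_mem (show j ∈ {j | E i j} from hj)).trans ?_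
    obtain ⟨l, hl⟩ := Nat.exists_eq_add_of_le hτ
    rw [hl, Nat.add_comm]
    exact CIter_succ_subset l
  · obtain ⟨n, hn⟩ := Nat.exists_eq_add_of_le hpos
    rw [hn, Nat.add_comm]
    exact Set.inter_subset_left.trans PreInt_subset

variable {m : ℕ} (e : Fin m → Q)

lemma GS_succ (h : 0 < m) (n : ℕ) :
    GS f E τ Hld S e (n + 1) =
      GSStep f E τ Hld S (e ⟨n % m, Nat.mod_lt n h⟩) (GS f E τ Hld S e n) := by
  rw [GS]; exact dif_pos h

lemma GS_fix (a : ℕ) : ∀ d : ℕ, ∀ q : Q,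
    (∀ t, t < d → ∀ ht : 0 < m, e ⟨(a + t) % m, Nat.mod_lt _ ht⟩ ≠ q) →
    GS f E τ Hld S e (a + d) q = GS f E τ Hld S e a q
  | 0, q, _ => rfl
  | d + 1, q, hne => by
      rcases Nat.eq_zero_or_pos m with hm | hm
      · rw [show a + (d + 1) = (a + d) + 1 from rfl, GS]
        rw [dif_neg (by omega)]
        exact GS_fix a d q fun t ht => hne t (Nat.lt_succ_of_lt ht)
      · rw [show a + (d + 1) = (a + d) + 1 from rfl, GS_succ f E τ Hld S e hm]
        have := hne d (Nat.lt_succ_self d) hm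
        rw [GSStep, if_neg (fun hq => this hq.symm)]
        exact GS_fix a d q fun t ht => hne t (Nat.lt_succ_of_lt ht)

lemma GS_subset_S (hrange : ∀ q, (∃ p, E q p) ↔ ∃ r, e r = q)
    (hH1 : ∀ i, (∃ p, E i p) → 1 ≤ Hld i) :
    ∀ n : ℕ, ∀ q : Q, GS f E τ Hld S e n q ⊆ S q
  | 0, q => by
      unfold GS GSInit
      split
      · exact le_refl _
      · exact maxInv_subset
  | n + 1, q => by
      rcases Nat.eq_zero_or_pos m with hm | hm
      · rw [GS, dif_neg (by omega)]
        exact GS_subset_S hrange hH1 n q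
      · rw [GS_succ f E τ Hld S e hm, GSStep]
        split
        · rename_i hq
          subst hq
          set i := e ⟨n % m, Nat.mod_lt n hm⟩ with hi
          have hns : ∃ p, E i p := (hrange i).2 ⟨_, hi.symm⟩
          exact InvPre_subset_S f E τ Hld S hns (hH1 i hns) _
        · exact GS_subset_S hrange hH1 n q

lemma GS_step_subset (he : Function.Injective e)
    (hrange : ∀ q, (∃ p, E q p) ↔ ∃ r, e r = q)
    (hH1 : ∀ i, (∃ p, E i p) → 1 ≤ Hld i) :
    ∀ n : ℕ, ∀ q : Q, GS f E τ Hld S e (n + 1) q ⊆ GS f E τ Hld S e n q := by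
  intro n
  induction n using Nat.strong_induction_on with
  | _ n IH =>
    intro q
    rcases Nat.eq_zero_or_pos m with hm | hm
    · rw [GS, dif_neg (by omega)]
    · rw [GS_succ f E τ Hld S e hm, GSStep]
      split
      · rename_i hq
        subst hq
        set i := e ⟨n % m, Nat.mod_lt n hm⟩ with hi
        have hns : ∃ p, E i p := (hrange i).2 ⟨_, hi.symm⟩
        rcases lt_or_ge n m with hnm | hnm
        · -- first sweep: `i` has not been updated yet, `GS n i = S i`
          have hfix : GS f E τ Hld S e (0 + n) i = GS f E τ Hld S e 0 i := by
            apply GS_fix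
            intro t ht ht0 hqe
            have := he hqe
            simp only [Fin.mk.injEq] at this
            rw [Nat.mod_eq_of_lt (by omega), Nat.mod_eq_of_lt hnm] at this
            omega
          rw [zero_add] at hfix
          have hGSi : GS f E τ Hld S e n i = S i := by
            rw [hfix]; show GSInit f E S i = S i
            rw [GSInit, if_pos hns]
          rw [hGSi]
          exact InvPre_subset_S f E τ Hld S hns (hH1 i hns) _
        · -- `i` was last updated at step `n - m`
          set a := n - m with ha
          have ham : a % m = n % m := by
            conv_rhs => rw [show n = a + m by omega]
            rw [Nat.add_mod_right]
          have hfin : (⟨a % m, Nat.mod_lt a hm⟩ : Fin m) =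
              ⟨n % m, Nat.mod_lt n hm⟩ := Fin.ext ham
          have hie : i = e ⟨a % m, Nat.mod_lt a hm⟩ :=
            hi.trans (congrArg e hfin.symm)
          have hstep : GS f E τ Hld S e (a + 1) i =
              InvPre f E τ Hld S i (GS f E τ Hld S e a) := by
            rw [GS_succ f E τ Hld S e hm, GSStep, if_pos hie, ← hie]
          have hfix : GS f E τ Hld S e ((a + 1) + (m - 1)) i =
              GS f E τ Hld S e (a + 1) i := by
            apply GS_fix
            intro t ht ht0 hqe
            have h1 := he hqe
            simp only [Fin.mk.injEq] at h1
            rw [← ham] at h1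
            have h2 : a ≡ a + 1 + t [MOD m] := by
              unfold Nat.ModEq; rw [h1]
            have h3 := (Nat.modEq_iff_dvd' (by omega)).mp h2
            have h4 : a + 1 + t - a = 1 + t := by omega
            rw [h4] at h3
            have := Nat.le_of_dvd (by omega) h3
            omega
          have hGSi : GS f E τ Hld S e n i =
              InvPre f E τ Hld S i (GS f E τ Hld S e a) := by
            rw [show n = (a + 1) + (m - 1) by omega, hfix, hstep]
          have chain : ∀ d, a + d ≤ n → ∀ q',
              GS f E τ Hld S e (a + d) q' ⊆ GS f E τ Hld S e a q' := by
            intro d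
            induction d with
            | zero => intro _ q'; exact subset_rfl
            | succ d ihd =>
                intro hdn q'
                exact (IH (a + d) (by omega) q').trans (ihd (by omega) q')
          rw [hGSi]
          refine InvPre_mono f E τ Hld S fun q' => ?_
          have := chain m (by omega) q'
          rwa [show a + m = n by omega] at this
      · exact subset_rfl

end Aux

/-- the Gauss–Seidel iteration of Algorithm 1 (with the non-sink
states enumerated bijectively by `e : Fin m → Q`, each non-sink state having a
least holding time `H_i ≥ 1` with `H_i ≥ T_min`, and `W^{k,l}` realized as
`GS (k * m + l)`) is monotonically non-expanding in element-wise set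
inclusion: `W^{k,l+1} ⊆ W^{k,l}` for all `k ≥ 0` and `0 ≤ l ≤ m − 1`, and all
iterates are contained (element-wise) in the safety specification `S`. -/
theorem gaussSeidel_antitone {Q X U : Type*} (f : Q → X → U → Set X)
    (E : Q → Q → Prop) (τ : Q → Q → ℕ) (Hld : Q → ℕ) (S : Q → Set X)
    {m : ℕ} (e : Fin m → Q) (he : Function.Injective e)
    (hrange : ∀ q, (∃ p, E q p) ↔ ∃ r, e r = q)
    (hH1 : ∀ i, (∃ p, E i p) → 1 ≤ Hld i)
    (hTH : ∀ i, (∃ p, E i p) → Tmin E τ i ≤ Hld i) :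
    (∀ k : ℕ, ∀ l < m, ∀ q : Q,
        GS f E τ Hld S e (k * m + (l + 1)) q ⊆ GS f E τ Hld S e (k * m + l) q) ∧
    (∀ n : ℕ, ∀ q : Q, GS f E τ Hld S e n q ⊆ S q) := by
  constructor
  · intro k l hl q
    have h := GS_step_subset f E τ Hld S e he hrange hH1 (k * m + l) q
    rwa [show k * m + l + 1 = k * m + (l + 1) by omega] at h
  · exact GS_subset_S f E τ Hld S e hrange hH1
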